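/- Let (A, m) be a Noetherian local ring and let 0 → M_h → M_{h-1} → ⋯ → M_1 → M_0 be a complex of finitely generated A-modules (M_i sitting in homological degree i) such that depth_A(M_i) ≥ i for every 0 ≤ i ≤ h. If for every i ≥ 1 the homology module H_i of the complex is either zero or has depth 0 over A, then H_i = 0 for all i ≥ 1, i.e., the complex is exact in all positive degrees. -/

import Mathlib

open CategoryTheory

/-- The depth of a module `M` over a local ring `A`: the maximal length of an
`M`-regular sequence consisting of elements of the maximal ideal of `A`.  (Here we use
weakly regular sequences; over a Noetherian local ring this agrees with the usual depth
for finitely generated modules, and gives the zero module infinite depth, in accordance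
with the usual convention.) -/
noncomputable def moduleDepth (A M : Type*) [CommRing A] [IsLocalRing A]
    [AddCommGroup M] [Module A M] : ℕ∞ :=
  sSup {n : ℕ∞ | ∃ rs : List A, (rs.length : ℕ∞) = n ∧
    (∀ r ∈ rs, r ∈ IsLocalRing.maximalIdeal A) ∧ RingTheory.Sequence.IsWeaklyRegular M rs}

/-!
Depth is read off `Ext` (Rees): `n ≤ depth M` iff `Ext^i(k, M) = 0` for all `i < n`, where
`k` is the residue field. The long exact `Ext` sequence of `0 → K → M → P → 0` therefore gives
`depth P ≥ n` as soon as `depth K ≥ n + 1` and `depth M ≥ n`.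

Let `q ≥ 1` be the largest index with `H_q ≠ 0`, and let `B_k` be the image of `M_{k+1} → M_k`.
Since the complex is exact above `q`, the sequences `0 → B_{k+1} → M_{k+1} → B_k → 0` give
`depth B_k ≥ k + 1` for `k ≥ q`, by descending induction from `B_k = 0` for `k ≥ h`. Then
`0 → B_q → Z_q → H_q → 0` with `depth B_q ≥ 2` and `depth Z_q ≥ 1` (as `Z_q ⊆ M_q`) gives
`depth H_q ≥ 1`, contradicting the hypothesis on `H_q`.
-/

open Abelian RingTheory.Sequence IsLocalRing

universe u

namespace CategoryTheory

variable {C : Type*} [Category C] [Abelian C] [HasExt C]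

lemma Abelian.Ext.subsingleton_of_isZero {X Y : C} (hY : Limits.IsZero Y) (n : ℕ) :
    Subsingleton (Ext X Y n) where
  allEq a b := by
    rw [← a.comp_mk₀_id, ← b.comp_mk₀_id, hY.eq_zero_of_src (𝟙 Y), Ext.mk₀_zero,
      Ext.comp_zero, Ext.comp_zero]

lemma ShortComplex.ShortExact.subsingleton_ext_X₃ {S : ShortComplex C} (hS : S.ShortExact)
    (X : C) (n : ℕ) [Subsingleton (Ext X S.X₁ (n + 1))] [Subsingleton (Ext X S.X₂ n)] :
    Subsingleton (Ext X S.X₃ n) where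
  allEq a b := by
    suffices ∀ x : Ext X S.X₃ n, x = 0 by rw [this a, this b]
    intro x
    obtain ⟨y, rfl⟩ := Ext.covariant_sequence_exact₃ X hS x rfl (Subsingleton.elim _ _)
    rw [Subsingleton.elim y 0, Ext.zero_comp]

end CategoryTheory

lemma isWeaklyRegular_of_subsingleton {R M : Type*} [CommRing R] [AddCommGroup M] [Module R M]
    [Subsingleton M] (rs : List R) : IsWeaklyRegular M rs :=
  (isWeaklyRegular_iff M rs).mpr fun _ _ x y _ ↦ Subsingleton.elim x y

section Depth

variable {A : Type*} [CommRing A] [IsLocalRing A] {M : Type*} [AddCommGroup M] [Module A M]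

lemma le_moduleDepth_iff {n : ℕ} : (n : ℕ∞) ≤ moduleDepth A M ↔
    ∃ rs : List A, rs.length = n ∧ (∀ r ∈ rs, r ∈ maximalIdeal A) ∧ IsWeaklyRegular M rs := by
  constructor
  · intro hn
    rcases n with - | n
    · exact ⟨[], rfl, by simp, IsWeaklyRegular.nil A M⟩
    obtain ⟨_, ⟨rs, rfl, hmem, hreg⟩, hlt⟩ :=
      lt_sSup_iff.mp ((ENat.natCast_lt_natCast.mpr n.lt_succ_self).trans_le hn)
    have hlen : n + 1 ≤ rs.length := by exact_mod_cast Order.add_one_le_of_lt hlt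
    rw [← List.take_append_drop (n + 1) rs, isWeaklyRegular_append_iff] at hreg
    exact ⟨rs.take (n + 1), by simp [hlen], fun r hr ↦ hmem r (List.mem_of_mem_take hr), hreg.1⟩
  · rintro ⟨rs, rfl, hmem, hreg⟩
    exact le_sSup ⟨rs, rfl, hmem, hreg⟩

lemma moduleDepth_eq_top_of_subsingleton [Subsingleton M] : moduleDepth A M = ⊤ :=
  ENat.eq_top_iff_forall_ge.mpr fun n ↦ le_moduleDepth_iff.mpr
    ⟨List.replicate n 0, by simp, fun r hr ↦ by simp [List.eq_of_mem_replicate hr],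
      isWeaklyRegular_of_subsingleton _⟩

lemma moduleDepth_congr {N : Type*} [AddCommGroup N] [Module A N] (e : M ≃ₗ[A] N) :
    moduleDepth A M = moduleDepth A N := by
  simp only [moduleDepth, e.isWeaklyRegular_congr]

lemma one_le_moduleDepth_submodule (N : Submodule A M) (hM : (1 : ℕ∞) ≤ moduleDepth A M) :
    (1 : ℕ∞) ≤ moduleDepth A N := by
  obtain ⟨rs, hlen, hmem, hreg⟩ := le_moduleDepth_iff.mp (by exact_mod_cast hM)
  obtain ⟨r, rfl⟩ := List.length_eq_one_iff.mp hlen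
  rw [isWeaklyRegular_singleton_iff] at hreg
  exact_mod_cast le_moduleDepth_iff.mpr
    ⟨[r], rfl, hmem, (isWeaklyRegular_singleton_iff _ _).mpr (hreg.submodule N)⟩

lemma maximalIdeal_smul_top_lt_top [Nontrivial M] [Module.Finite A M] :
    maximalIdeal A • (⊤ : Submodule A M) < ⊤ := by
  refine lt_top_iff_ne_top.mpr (Submodule.top_ne_ideal_smul_of_le_jacobson_annihilator ?_).symm
  rw [IsLocalRing.jacobson_eq_maximalIdeal]
  exact fun h ↦ not_subsingleton M (Module.annihilator_eq_top_iff.mp h)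

end Depth

section Noetherian

variable {A : Type u} [CommRing A] [IsLocalRing A] [IsNoetherianRing A]

lemma le_moduleDepth_iff_subsingleton_ext (M : ModuleCat.{u} A) [Module.Finite A M] (n : ℕ) :
    (n : ℕ∞) ≤ moduleDepth A M ↔
      ∀ i < n, Subsingleton (Ext (ModuleCat.of A (Shrink.{u} (A ⧸ maximalIdeal A))) M i) := by
  rcases subsingleton_or_nontrivial M with hM | hM
  · simp only [moduleDepth_eq_top_of_subsingleton, le_top, true_iff]
    exact fun i _ ↦ Ext.subsingleton_of_isZero (ModuleCat.isZero_of_subsingleton M) i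
  have hRees := (ModuleCat.exists_isRegular_tfae _ n M maximalIdeal_smul_top_lt_top).out 1 3
  rw [le_moduleDepth_iff, hRees]
  refine exists_congr fun rs ↦ and_congr_right fun _ ↦ and_congr_right fun hmem ↦ ?_
  exact (isRegular_iff_isWeaklyRegular_of_subset_maximalIdeal hmem).symm

lemma le_moduleDepth_of_surjective {M N : Type u} [AddCommGroup M] [Module A M]
    [Module.Finite A M] [AddCommGroup N] [Module A N] {f : M →ₗ[A] N}
    (hf : Function.Surjective f) {n : ℕ}
    (hker : ((n + 1 : ℕ) : ℕ∞) ≤ moduleDepth A (LinearMap.ker f))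
    (hM : (n : ℕ∞) ≤ moduleDepth A M) : (n : ℕ∞) ≤ moduleDepth A N := by
  have := Module.Finite.of_surjective f hf
  have hS := LinearMap.shortExact_shortComplexKer hf
  rw [le_moduleDepth_iff_subsingleton_ext (ModuleCat.of A _)] at hker hM ⊢
  intro i hi
  have := hker (i + 1) (by omega)
  have := hM i hi
  exact hS.subsingleton_ext_X₃ _ i

end Noetherian

namespace ChainComplex

lemma range_d_eq_ker_d {R : Type u} [Ring R] (C : ChainComplex (ModuleCat.{u} R) ℕ) {k : ℕ}
    (hC : C.ExactAt (k + 1)) :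
    LinearMap.range (C.d (k + 2) (k + 1)).hom = LinearMap.ker (C.d (k + 1) k).hom := by
  rw [C.exactAt_iff' (k + 2) (k + 1) k (by simp) (by simp)] at hC
  exact hC.moduleCat_range_eq_ker

variable {A : Type u} [CommRing A] [IsLocalRing A] [IsNoetherianRing A]
  (C : ChainComplex (ModuleCat.{u} A) ℕ) [∀ i, Module.Finite A (C.X i)]

lemma le_moduleDepth_range_d {h : ℕ} (hbound : ∀ i, h < i → Limits.IsZero (C.X i))
    (hdepth : ∀ i : ℕ, (i : ℕ∞) ≤ moduleDepth A (C.X i)) {q : ℕ}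
    (hexact : ∀ i, q < i → C.ExactAt i) :
    ∀ k, q ≤ k → ((k + 1 : ℕ) : ℕ∞) ≤ moduleDepth A (LinearMap.range (C.d (k + 1) k).hom) := by
  intro k
  induction k using Nat.strong_decreasing_induction with
  | base =>
    refine ⟨h, fun k hk _ ↦ ?_⟩
    have := ModuleCat.subsingleton_of_isZero (hbound (k + 1) (by omega))
    have := (C.d (k + 1) k).hom.surjective_rangeRestrict.subsingleton
    rw [moduleDepth_eq_top_of_subsingleton]
    exact le_top
  | step k ih =>
    intro hk
    refine le_moduleDepth_of_surjective (C.d (k + 1) k).hom.surjective_rangeRestrict ?_ (hdepth _)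
    rw [LinearMap.ker_rangeRestrict, ← C.range_d_eq_ker_d (hexact (k + 1) (by omega))]
    exact ih (k + 1) (by omega) (by omega)

lemma one_le_moduleDepth_homology {k : ℕ}
    (hB : (2 : ℕ∞) ≤ moduleDepth A (LinearMap.range (C.d (k + 2) (k + 1)).hom))
    (hX : (1 : ℕ∞) ≤ moduleDepth A (C.X (k + 1))) :
    (1 : ℕ∞) ≤ moduleDepth A (C.homology (k + 1)) := by
  set S := C.sc' (k + 2) (k + 1) k
  have : Module.Finite A S.X₂ := inferInstanceAs (Module.Finite A (C.X (k + 1)))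
  have eH : (C.homology (k + 1) : Type u) ≃ₗ[A] S.moduleCatLeftHomologyData.H :=
    (C.homologyIsoSc' (k + 2) (k + 1) k (by simp) (by simp) ≪≫
      S.moduleCatHomologyIso).toLinearEquiv
  have eB : LinearMap.range S.moduleCatToCycles ≃ₗ[A] LinearMap.range S.f.hom :=
    Submodule.equivMapOfInjective _ (Submodule.injective_subtype _) _ ≪≫ₗ
      LinearEquiv.ofEq _ _ (LinearMap.range_comp _ _).symm
  rw [moduleDepth_congr eH]
  refine le_moduleDepth_of_surjective (n := 1) (Submodule.mkQ_surjective _) ?_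
    (one_le_moduleDepth_submodule _ hX)
  rw [Submodule.ker_mkQ, moduleDepth_congr eB]
  exact hB

end ChainComplex

/-- **Acyclicity lemma.** Let `(A, m)` be a Noetherian local ring and let
`0 → M_h → M_{h-1} → ⋯ → M_1 → M_0` be a complex of finitely generated `A`-modules
(`M_i` in homological degree `i`) with `depth_A (M_i) ≥ i` for all `0 ≤ i ≤ h`.  If for
every `i ≥ 1` the homology `H_i` of the complex is zero or has depth `0` over `A`, then
`H_i = 0` for all `i ≥ 1`: the complex is exact in all positive degrees. -/
theorem acyclicity_lemma
    (A : Type u) [CommRing A] [IsLocalRing A] [IsNoetherianRing A]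
    (h : ℕ) (C : ChainComplex (ModuleCat.{u} A) ℕ)
    (hfg : ∀ i : ℕ, Module.Finite A (C.X i))
    (hbound : ∀ i : ℕ, h < i → Limits.IsZero (C.X i))
    (hdepth : ∀ i : ℕ, i ≤ h → (i : ℕ∞) ≤ moduleDepth A (C.X i))
    (hhomology : ∀ i : ℕ, 1 ≤ i →
      Limits.IsZero (C.homology i) ∨ moduleDepth A (C.homology i) = 0) :
    ∀ i : ℕ, 1 ≤ i → Limits.IsZero (C.homology i) := by
  have hdepth' : ∀ i : ℕ, (i : ℕ∞) ≤ moduleDepth A (C.X i) := by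
    intro i
    by_cases hi : i ≤ h
    · exact hdepth i hi
    · have := ModuleCat.subsingleton_of_isZero (hbound i (by omega))
      rw [moduleDepth_eq_top_of_subsingleton]
      exact le_top
  have := hfg
  intro i
  induction i using Nat.strong_decreasing_induction with
  | base => exact ⟨h, fun i hi _ ↦ ShortComplex.isZero_homology_of_isZero_X₂ _ (hbound i hi)⟩
  | step q ih =>
    intro hq
    refine (hhomology q hq).resolve_right fun hzero ↦ ?_
    obtain ⟨k, rfl⟩ : ∃ k, q = k + 1 := ⟨q - 1, by omega⟩
    have hexact : ∀ i, k + 1 < i → C.ExactAt i :=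
      fun i hi ↦ (C.exactAt_iff_isZero_homology i).mpr (ih i hi (by omega))
    have hB := C.le_moduleDepth_range_d hbound hdepth' hexact (k + 1) le_rfl
    have hH := C.one_le_moduleDepth_homology (le_trans (by norm_cast; omega) hB)
      (le_trans (by simp) (hdepth' (k + 1)))
    rw [hzero] at hH
    exact absurd hH (by norm_num)
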